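/- Every l-dimensional subspace X of R^n contains a vector v with var(v) ≥ l - 1. -/

import Mathlib

open scoped BigOperators

/-- Number of sign changes between consecutive entries of a list of reals. -/
noncomputable def listVar : List ℝ → ℕ
  | a :: b :: t => (if a * b < 0 then 1 else 0) + listVar (b :: t)
  | _ => 0

/-- `var v` : the number of sign changes of `v`, ignoring zero entries. -/
noncomputable def var {n : ℕ} (v : Fin n → ℝ) : ℕ :=
  listVar ((List.ofFn v).filter (fun x => x ≠ 0))

/-- `varbar v` : the maximum of `var w` over all `w` agreeing with `v` on the
nonzero entries of `v`. -/
noncomputable def varbar {n : ℕ} (v : Fin n → ℝ) : ℕ :=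
  sSup {m | ∃ w : Fin n → ℝ, (∀ i, v i ≠ 0 → w i = v i) ∧ var w = m}

/-- `altv v = (v 0, -v 1, v 2, ...)`. -/
def altv {n : ℕ} (v : Fin n → ℝ) : Fin n → ℝ := fun i => (-1 : ℝ) ^ (i : ℕ) * v i

/-- A vector with entries in `{0, 1, -1}`, representing a sign vector. -/
def IsSignVec {n : ℕ} (σ : Fin n → ℝ) : Prop := ∀ i, σ i = 0 ∨ σ i = 1 ∨ σ i = -1

/-! Pick `l = dim X` coordinates on which restriction `X → ℝˡ` is onto (the pivot columns of a
reduced row echelon form of a basis of `X`; here a column basis of the basis matrix). The vector of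
`X` taking the values `1, -1, 1, …` on these coordinates, in increasing order, has at least `l - 1`
sign changes, because deleting entries of a sequence of nonzero reals never creates sign changes. -/

open Submodule Module

theorem Submodule.exists_finset_card_eq_finrank_forall_exists_mem_eqOn {K ι : Type*} [Field K]
    (X : Submodule K (ι → K)) [FiniteDimensional K X] :
    ∃ s : Finset ι, s.card = finrank K X ∧ ∀ c : ι → K, ∃ v ∈ X, Set.EqOn v c s := by
  set l := finrank K X
  let b : Fin l → ι → K := fun j => (Module.finBasis K X j : ι → K)
  have hb : LinearIndependent K b :=
    (Module.finBasis K X).linearIndependent.map' X.subtype X.ker_subtype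
  -- Linear independence of the rows of a matrix with finitely many rows is equivalent to its
  -- columns spanning; used once for the basis matrix of `X`, once for a column basis of it.
  have hcols : span K (Set.range (flip b)) = ⊤ := span_flip_eq_top_iff_linearIndependent.mpr hb
  obtain ⟨κ, a, ha, hspan, hli⟩ := exists_linearIndependent' K (flip b)
  have : Fintype κ := @Fintype.ofFinite κ hli.finite
  have hcard : Fintype.card κ = l := by
    simpa using (finrank_eq_card_basis (Basis.mk hli (by rw [hspan, hcols]))).symm
  have hrows : span K (Set.range (flip (flip b ∘ a))) = ⊤ :=
    span_flip_eq_top_iff_linearIndependent.mpr hli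
  refine ⟨Finset.univ.map ⟨a, ha⟩, by simp [hcard], fun c => ?_⟩
  obtain ⟨x, hx⟩ := (mem_span_range_iff_exists_fun K).mp (hrows ▸ mem_top : c ∘ a ∈ _)
  refine ⟨∑ j, x j • b j, sum_mem fun j _ => X.smul_mem _ (Module.finBasis K X j).2, ?_⟩
  rintro _ hi
  obtain ⟨k, -, rfl⟩ := Finset.mem_map.mp hi
  simpa [flip] using congrFun hx k

theorem Submodule.exists_orderEmbedding_forall_exists_mem_comp_eq {K ι : Type*} [Field K]
    [LinearOrder ι] (X : Submodule K (ι → K)) [FiniteDimensional K X] :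
    ∃ e : Fin (finrank K X) ↪o ι, ∀ c : Fin (finrank K X) → K, ∃ v ∈ X, v ∘ e = c := by
  obtain ⟨s, hs, hX⟩ := X.exists_finset_card_eq_finrank_forall_exists_mem_eqOn
  refine ⟨s.orderEmbOfFin hs, fun c => ?_⟩
  obtain ⟨v, hv, hvc⟩ := hX (Function.extend (s.orderEmbOfFin hs) c 0)
  refine ⟨v, hv, funext fun k => ?_⟩
  rw [Function.comp_apply, hvc (s.orderEmbOfFin_mem hs k),
    (s.orderEmbOfFin hs).injective.extend_apply]

theorem mul_neg_or_mul_neg_of_mul_neg {α : Type*} [CommRing α] [LinearOrder α]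
    [IsStrictOrderedRing α] {a b c : α} (hb : b ≠ 0) (hac : a * c < 0) :
    a * b < 0 ∨ b * c < 0 := by
  by_contra! h
  have hprod : a * b * (b * c) = b * b * (a * c) := by ring
  exact (mul_neg_of_pos_of_neg (mul_self_pos.mpr hb) hac).not_ge (hprod ▸ mul_nonneg h.1 h.2)

lemma listVar_cons_cons (a b : ℝ) (t : List ℝ) :
    listVar (a :: b :: t) = (if a * b < 0 then 1 else 0) + listVar (b :: t) := rfl

lemma listVar_zero_cons (t : List ℝ) : listVar (0 :: t) = listVar t := by
  cases t <;> simp [listVar]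

lemma listVar_cons_le_cons_cons (a : ℝ) {b : ℝ} (hb : b ≠ 0) (t : List ℝ) :
    listVar (a :: t) ≤ listVar (a :: b :: t) := by
  cases t with
  | nil => simp [listVar]
  | cons c t =>
    simp only [listVar_cons_cons]
    by_cases hac : a * c < 0
    · rcases mul_neg_or_mul_neg_of_mul_neg hb hac with h | h <;> simp [hac, h]
    · simp only [hac, if_false]
      omega

lemma listVar_cons_le_cons_of_sublist (a : ℝ) {s t : List ℝ} (hst : s.Sublist t)
    (ht : ∀ x ∈ t, x ≠ 0) : listVar (a :: s) ≤ listVar (a :: t) := by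
  induction hst generalizing a with
  | slnil => rfl
  | cons b _ ih =>
    exact (ih a fun x hx => ht x (by simp [hx])).trans
      (listVar_cons_le_cons_cons a (ht b (by simp)) _)
  | cons_cons b _ ih =>
    simp only [listVar_cons_cons]
    have := ih b fun x hx => ht x (by simp [hx])
    omega

lemma listVar_le_of_sublist {s t : List ℝ} (hst : s.Sublist t) (ht : ∀ x ∈ t, x ≠ 0) :
    listVar s ≤ listVar t := by
  simpa only [listVar_zero_cons] using listVar_cons_le_cons_of_sublist 0 hst ht

lemma listVar_le_var {n : ℕ} {L : List ℝ} {v : Fin n → ℝ} (hL : L.Sublist (List.ofFn v))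
    (hL0 : ∀ x ∈ L, x ≠ 0) : listVar L ≤ var v := by
  have hfilter : L.filter (· ≠ 0) = L := List.filter_eq_self.mpr (by simpa using hL0)
  refine listVar_le_of_sublist (hfilter ▸ hL.filter _) fun x hx => ?_
  simpa using (List.mem_filter.mp hx).2

lemma listVar_eq_length_sub_one_of_isChain {t : List ℝ} (ht : t.IsChain (· * · < 0)) :
    listVar t = t.length - 1 := by
  induction t with
  | nil => rfl
  | cons a t ih =>
    cases t with
    | nil => rfl
    | cons b t =>
      rw [List.isChain_cons_cons] at ht
      rw [listVar_cons_cons, if_pos ht.1, ih ht.2]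
      simp only [List.length_cons]
      omega

lemma isChain_ofFn_neg_one_pow (m : ℕ) :
    (List.ofFn fun k : Fin m => (-1 : ℝ) ^ (k : ℕ)).IsChain (· * · < 0) := by
  rw [List.isChain_iff_getElem]
  intro i hi
  simp [← pow_add]

lemma List.ofFn_comp_sublist {α : Type*} {m n : ℕ} (f : Fin n → α) {e : Fin m → Fin n}
    (he : StrictMono e) : (List.ofFn (f ∘ e)).Sublist (List.ofFn f) := by
  rw [← List.map_ofFn, List.ofFn_eq_map (f := f)]
  refine (List.sublist_of_subperm_of_pairwise ?_ (he.sortedLT_ofFn.pairwise.imp le_of_lt)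
    ((List.pairwise_lt_finRange n).imp le_of_lt)).map f
  exact List.subperm_of_subset (List.nodup_ofFn.mpr he.injective) fun x _ => List.mem_finRange x

theorem stmt15 (n l : ℕ) (X : Submodule ℝ (Fin n → ℝ)) (hX : Module.finrank ℝ X = l) :
    ∃ v ∈ X, l - 1 ≤ var v := by
  subst hX
  obtain ⟨e, he⟩ := X.exists_orderEmbedding_forall_exists_mem_comp_eq
  obtain ⟨v, hv, hve⟩ := he fun k => (-1) ^ (k : ℕ)
  refine ⟨v, hv, ?_⟩
  calc finrank ℝ X - 1 = listVar (List.ofFn (v ∘ e)) := by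
        rw [hve, listVar_eq_length_sub_one_of_isChain (isChain_ofFn_neg_one_pow _),
          List.length_ofFn]
    _ ≤ var v := listVar_le_var (List.ofFn_comp_sublist v e.strictMono) (by simp [hve])
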